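/- Let g : ℕ → ℝ be any function and define z_0 = 1 and z_k = ∑_{j=0}^{k−1} z_j g(j)/(k−j)! for k ≥ 1. Then for all k ≥ 1, z_k = g(0)·(1/k! + ∑_{h=1}^{k−1} ∑_{1≤i_1<⋯<i_h<k} [1/(i_1!(i_2−i_1)!⋯(k−i_h)!)] ∏_{t=1}^h g(i_t)). -/

import Mathlib

/-!
Sorting the chains `0 < i₁ < ⋯ < i_h < k` by their largest element `j = i_h` splits off the last
gap factor `(k - j)!`, so the bracketed sum `w k = chainSum g k` satisfies
`w k = 1/k! + ∑_{0<j<k} w j g(j)/(k-j)!`. This is the recursion for `z k`, with the `j = 0` term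
`z 0 g(0)/k!` accounting for the empty chain; strong induction gives `z k = g(0) w k`.
-/

open Finset

/-- For a chain `1 ≤ i₁ < ⋯ < i_h < k` encoded as the finset
    `S = {i₁, …, i_h} ⊆ (0, k)`, the product of factorials
    `i₁! (i₂ - i₁)! ⋯ (k - i_h)!` of the successive gaps. -/
def gapFactorials (k : ℕ) (S : Finset ℕ) : ℝ :=
  let L : List ℕ := 0 :: (S.sort (· ≤ ·) ++ [k])
  (List.zipWith (fun p n => ((Nat.factorial (n - p) : ℕ) : ℝ)) L L.tail).prod

theorem List.zipWith_tail_append_singleton {α β : Type*} (f : α → α → β) (a : α) :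
    ∀ (l : List α) (hl : l ≠ []),
      zipWith f (l ++ [a]) (l ++ [a]).tail = zipWith f l l.tail ++ [f (l.getLast hl) a]
  | [x], _ => rfl
  | x :: y :: l, _ => by
    have ih := zipWith_tail_append_singleton f a (y :: l) (cons_ne_nil y l)
    simp only [cons_append, tail_cons, zipWith_cons_cons] at ih ⊢
    rw [ih, getLast_cons_cons]

theorem Finset.sort_insert_of_forall_lt {α : Type*} [LinearOrder α] {s : Finset α} {a : α}
    (h : ∀ b ∈ s, b < a) :
    (insert a s).sort (· ≤ ·) = s.sort (· ≤ ·) ++ [a] := by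
  have ha : a ∉ s := fun ha => lt_irrefl a (h a ha)
  have hnodup : (s.sort (· ≤ ·) ++ [a]).Nodup := by
    simp [List.nodup_append, ha, sort_nodup s (· ≤ ·)]
  have hset : (s.sort (· ≤ ·) ++ [a]).toFinset = insert a s := by
    ext; simp
  rw [← hset, List.toFinset_sort _ hnodup, List.pairwise_append]
  refine ⟨pairwise_sort s _, List.pairwise_singleton _ a, ?_⟩
  simp only [mem_sort, List.mem_singleton, forall_eq]
  exact fun b hb => (h b hb).le

@[to_additive]
theorem Finset.prod_powerset_eq_mul_prod_max {α β : Type*} [LinearOrder α] [CommMonoid β]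
    (s : Finset α) (f : Finset α → β) :
    ∏ t ∈ s.powerset, f t =
      f ∅ * ∏ a ∈ s, ∏ t ∈ {x ∈ s | x < a}.powerset, f (insert a t) := by
  induction s using Finset.induction_on_max with
  | empty => simp
  | insert a s hlt ih =>
    have ha : a ∉ s := fun ha => lt_irrefl a (hlt a ha)
    have hbelow_a : {x ∈ insert a s | x < a} = s := by
      ext x
      simp only [mem_filter, mem_insert]
      exact ⟨fun ⟨hx, hxa⟩ => hx.resolve_left hxa.ne, fun hx => ⟨Or.inr hx, hlt x hx⟩⟩
    have hbelow : ∏ b ∈ s, ∏ t ∈ {x ∈ insert a s | x < b}.powerset, f (insert b t) =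
        ∏ b ∈ s, ∏ t ∈ {x ∈ s | x < b}.powerset, f (insert b t) :=
      prod_congr rfl fun b hb => by rw [filter_insert, if_neg (hlt b hb).not_gt]
    rw [prod_powerset_insert ha, ih, prod_insert ha, hbelow_a, hbelow]
    ac_rfl

theorem Finset.sum_powerset_Ioo_eq_add_sum_max {α M : Type*} [LinearOrder α]
    [LocallyFiniteOrder α] [AddCommMonoid M] (a b : α) (f : Finset α → M) :
    ∑ t ∈ (Ioo a b).powerset, f t =
      f ∅ + ∑ j ∈ Ioo a b, ∑ t ∈ (Ioo a j).powerset, f (insert j t) := by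
  rw [sum_powerset_eq_add_sum_max]
  congr 1
  refine sum_congr rfl fun j hj => ?_
  rw [Ioo_filter_lt, min_eq_right (mem_Ioo.1 hj).2.le]

theorem gapFactorials_empty (k : ℕ) : gapFactorials k ∅ = k.factorial := by
  simp [gapFactorials]

theorem gapFactorials_insert_of_forall_lt {k j : ℕ} {S : Finset ℕ} (hS : ∀ i ∈ S, i < j) :
    gapFactorials k (insert j S) = gapFactorials j S * (k - j).factorial := by
  simp only [gapFactorials]
  rw [sort_insert_of_forall_lt hS, ← List.cons_append,
    List.zipWith_tail_append_singleton _ _ _ (List.cons_ne_nil _ _), List.prod_append]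
  simp

noncomputable def chainSum (g : ℕ → ℝ) (k : ℕ) : ℝ :=
  ∑ S ∈ (Ioo 0 k).powerset, (1 / gapFactorials k S) * ∏ i ∈ S, g i

theorem chainSum_eq (g : ℕ → ℝ) (k : ℕ) :
    chainSum g k = 1 / k.factorial + ∑ j ∈ Ioo 0 k, chainSum g j * g j / (k - j).factorial := by
  rw [chainSum, sum_powerset_Ioo_eq_add_sum_max, gapFactorials_empty, prod_empty, mul_one]
  congr 1
  refine sum_congr rfl fun j _ => ?_
  rw [chainSum, sum_mul, sum_div]
  refine sum_congr rfl fun S hS => ?_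
  have hS_lt : ∀ i ∈ S, i < j := fun i hi => (mem_Ioo.1 (mem_powerset.1 hS hi)).2
  rw [gapFactorials_insert_of_forall_lt hS_lt, prod_insert fun hj => (hS_lt j hj).false]
  field_simp

theorem iterated_convolution_formula
    (g : ℕ → ℝ)
    (z : ℕ → ℝ) (hz0 : z 0 = 1)
    (hz : ∀ k, 1 ≤ k →
      z k = ∑ j ∈ Finset.range k, z j * g j / (Nat.factorial (k - j))) :
    ∀ k, 1 ≤ k →
      z k = g 0 *
        ∑ S ∈ (Finset.Ioo 0 k).powerset,
          (1 / gapFactorials k S) * ∏ i ∈ S, g i := by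
  intro k
  induction k using Nat.strong_induction_on with
  | _ k ih =>
    intro hk
    change z k = g 0 * chainSum g k
    rw [hz k hk, range_eq_Ico, ← Ioo_insert_left hk, sum_insert left_notMem_Ioo, chainSum_eq,
      hz0, mul_add, mul_sum]
    congr 1
    · simp [div_eq_mul_inv]
    · refine sum_congr rfl fun j hj => ?_
      rw [ih j (mem_Ioo.1 hj).2 (mem_Ioo.1 hj).1, chainSum]
      ring
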